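/- arXiv:2507.09668 — 5 statements merged into one kernel-verified Lean document; each statement's English description precedes it below -/
import Mathlib

section
/- Let α : ℤ → ℝ be a finitely supported mask satisfying Σ_{i∈ℤ} α_{2i} = Σ_{i∈ℤ} α_{2i+1} = 1, and let ζ : ℤ → ℝ be absolutely summable with Σ_{i∈ℤ} ζ_i = 1 and K_ζ := 2 Σ_{i∈ℤ} |ζ_i|·|i| < ∞. Then for every bounded sequence c : ℤ → ℝ with Δc := sup_{j∈ℤ} |c_{j+1} − c_j| < ∞, the detail sequence d := c − S_α(D_ζ(c)) satisfies ‖d‖_∞ ≤ (K_ζ·‖α‖₁ + K_α·‖ζ‖₁)·Δc, where K_α := 2 Σ_{i∈ℤ} |α_i|·|i|, ‖α‖₁ := Σ_{i∈ℤ}|α_i|, and ‖ζ‖₁ := Σ_{i∈ℤ}|ζ_i|. -/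
noncomputable section

/-- Sup norm of a bi-infinite real sequence. -/
def supNorm (c : ℤ → ℝ) : ℝ := ⨆ j, |c j|

/-- Supremum of absolute first differences. -/
def deltaSup (c : ℤ → ℝ) : ℝ := ⨆ j, |c (j + 1) - c j|

/-- ℓ¹ norm of a sequence. -/
def l1Norm (a : ℤ → ℝ) : ℝ := ∑' i, |a i|

/-- The constant K_a = 2 Σ |a_i|·|i|. -/
def Kc (a : ℤ → ℝ) : ℝ := 2 * ∑' i : ℤ, |a i| * |(i : ℝ)|

/-- Subdivision operator (S_α c)_j = Σ_i α_{j-2i} c_i. -/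
def subdiv (α c : ℤ → ℝ) : ℤ → ℝ := fun j => ∑' i, α (j - 2 * i) * c i

/-- Decimation operator (D_ζ c)_j = Σ_i ζ_{j-i} c_{2i}. -/
def decim (ζ c : ℤ → ℝ) : ℤ → ℝ := fun j => ∑' i, ζ (j - i) * c (2 * i)

/-! Since `ζ` sums to `1`, `c k - (D_ζ c) i = ∑ l, ζ (i - l) * (c k - c (2 * l))`, and since the even
and the odd parts of `α` each sum to `1`, `c k - (S_α g) k = ∑ i, α (k - 2 * i) * (c k - g i)`.
Telescoping gives `|c k - c (2 * l)| ≤ |k - 2 * l| * Δc ≤ (|k - 2 * i| + 2 * |i - l|) * Δc`;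
summing this against `|ζ (i - l)|` and then against `|α (k - 2 * i)|` gives the bound, even with
`K_α / 2` in place of `K_α`. -/

open Function

lemma abs_sub_le_mul_of_abs_succ_sub_le {c : ℤ → ℝ} {D : ℝ} (h : ∀ j, |c (j + 1) - c j| ≤ D)
    (a b : ℤ) : |c a - c b| ≤ |(a : ℝ) - b| * D := by
  have of_le : ∀ a b, b ≤ a → |c a - c b| ≤ ((a : ℝ) - b) * D := by
    intro a b hab
    induction a, hab using Int.leInduction with
    | base => simp
    | succ a _ ih =>
      calc |c (a + 1) - c b| ≤ |c (a + 1) - c a| + |c a - c b| := abs_sub_le _ _ _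
        _ ≤ D + ((a : ℝ) - b) * D := add_le_add (h a) ih
        _ = ((↑(a + 1) : ℝ) - b) * D := by push_cast; ring
  rcases le_total b a with hba | hab
  · rw [abs_of_nonneg (sub_nonneg.mpr (Int.cast_le.mpr hba))]
    exact of_le a b hba
  · rw [abs_sub_comm, abs_sub_comm (a : ℝ), abs_of_nonneg (sub_nonneg.mpr (Int.cast_le.mpr hab))]
    exact of_le b a hab

lemma abs_sub_le_mul_deltaSup {c : ℤ → ℝ} (hc : BddAbove (Set.range fun j => |c (j + 1) - c j|))
    (a b : ℤ) : |c a - c b| ≤ |(a : ℝ) - b| * deltaSup c :=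
  abs_sub_le_mul_of_abs_succ_sub_le (fun j => le_ciSup hc j) a b

lemma deltaSup_nonneg (c : ℤ → ℝ) : 0 ≤ deltaSup c :=
  Real.iSup_nonneg fun _ => abs_nonneg _

lemma l1Norm_nonneg (a : ℤ → ℝ) : 0 ≤ l1Norm a :=
  tsum_nonneg fun _ => abs_nonneg _

lemma Kc_nonneg (a : ℤ → ℝ) : 0 ≤ Kc a :=
  mul_nonneg zero_le_two (tsum_nonneg fun _ => by positivity)

lemma tsum_comp_sub_left (f : ℤ → ℝ) (i : ℤ) : ∑' l, f (i - l) = ∑' m, f m :=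
  (Equiv.subLeft i).tsum_eq f

lemma sub_two_mul_injective (k : ℤ) : Injective fun i : ℤ => k - 2 * i :=
  fun a b h => by simp only at h; omega

lemma tsum_comp_sub_two_mul {α : ℤ → ℝ} (h_even : ∑' i, α (2 * i) = 1)
    (h_odd : ∑' i, α (2 * i + 1) = 1) (k : ℤ) : ∑' i, α (k - 2 * i) = 1 := by
  obtain ⟨m, rfl | rfl⟩ := Int.even_or_odd' k
  · rw [← h_even, ← tsum_comp_sub_left (fun j => α (2 * j)) m]
    simp only [mul_sub]
  · rw [← h_odd, ← tsum_comp_sub_left (fun j => α (2 * j + 1)) m]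
    congr 1; ext i; ring_nf

section Decimation

variable {ζ c : ℤ → ℝ}

lemma sub_decim_eq_tsum (hζ : Summable ζ) (hζ_one : ∑' i, ζ i = 1) {k i : ℤ}
    (hsum : Summable fun l => ζ (i - l) * (c k - c (2 * l))) :
    c k - decim ζ c i = ∑' l, ζ (i - l) * (c k - c (2 * l)) := by
  have hζi : Summable fun l => ζ (i - l) * c k :=
    ((Equiv.subLeft i).summable_iff.mpr hζ).mul_right _
  have hdecim : decim ζ c i = ∑' l, ζ (i - l) * c k - ∑' l, ζ (i - l) * (c k - c (2 * l)) := by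
    rw [← hζi.tsum_sub hsum]
    simp only [decim, mul_sub, sub_sub_cancel]
  rw [hdecim, tsum_mul_right, tsum_comp_sub_left ζ i, hζ_one]
  ring

lemma abs_sub_decim_le (hζ : Summable fun i => |ζ i|) (hζ_one : ∑' i, ζ i = 1)
    (hKζ : Summable fun i : ℤ => |ζ i| * |(i : ℝ)|)
    (hc : BddAbove (Set.range fun j => |c (j + 1) - c j|)) (k i : ℤ) :
    |c k - decim ζ c i| ≤ |(k : ℝ) - 2 * i| * (l1Norm ζ * deltaSup c) + Kc ζ * deltaSup c := by
  set D := deltaSup c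
  have hD : 0 ≤ D := deltaSup_nonneg c
  set u : ℤ → ℝ := fun m => |ζ m| * (|(k : ℝ) - 2 * i| * D) + |ζ m| * |(m : ℝ)| * (2 * D)
  have hu : HasSum u (|(k : ℝ) - 2 * i| * (l1Norm ζ * D) + Kc ζ * D) := by
    rw [l1Norm, Kc, show ∀ x L S : ℝ, x * (L * D) + 2 * S * D = L * (x * D) + S * (2 * D) by
      intros; ring]
    exact (hζ.hasSum.mul_right _).add (hKζ.hasSum.mul_right _)
  have hu_shift : HasSum (fun l => u (i - l)) _ := (Equiv.subLeft i).hasSum_iff.mpr hu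
  have hbound : ∀ l, ‖ζ (i - l) * (c k - c (2 * l))‖ ≤ u (i - l) := by
    intro l
    have htri : |(k : ℝ) - ↑(2 * l)| ≤ |(k : ℝ) - 2 * i| + 2 * |((i - l : ℤ) : ℝ)| := by
      calc |(k : ℝ) - ↑(2 * l)| = |((k : ℝ) - 2 * i) + 2 * ((i : ℝ) - l)| := by push_cast; ring_nf
        _ ≤ |(k : ℝ) - 2 * i| + 2 * |((i - l : ℤ) : ℝ)| := by
          push_cast; exact (abs_add_le _ _).trans_eq (by rw [abs_mul, abs_two])
    calc ‖ζ (i - l) * (c k - c (2 * l))‖ = |ζ (i - l)| * |c k - c (2 * l)| := by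
          rw [Real.norm_eq_abs, abs_mul]
      _ ≤ |ζ (i - l)| * ((|(k : ℝ) - 2 * i| + 2 * |((i - l : ℤ) : ℝ)|) * D) := by
          gcongr
          exact (abs_sub_le_mul_deltaSup hc _ _).trans (by gcongr)
      _ = u (i - l) := by simp only [u]; ring
  rw [sub_decim_eq_tsum hζ.of_abs hζ_one (hu_shift.summable.of_norm_bounded hbound)]
  exact tsum_of_norm_bounded hu_shift hbound

end Decimation

section Subdivision

variable {α : ℤ → ℝ}

lemma summable_comp_sub_two_mul_mul (hα : (support α).Finite) (k : ℤ) (g : ℤ → ℝ) :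
    Summable fun i => α (k - 2 * i) * g i :=
  summable_of_hasFiniteSupport <|
    (hα.preimage (sub_two_mul_injective k).injOn).subset (support_mul_subset_left _ _)

lemma sub_subdiv_eq_tsum (hα : (support α).Finite) (h_even : ∑' i, α (2 * i) = 1)
    (h_odd : ∑' i, α (2 * i + 1) = 1) (c g : ℤ → ℝ) (k : ℤ) :
    c k - subdiv α g k = ∑' i, α (k - 2 * i) * (c k - g i) := by
  simp only [mul_sub]
  rw [(summable_comp_sub_two_mul_mul hα k _).tsum_sub (summable_comp_sub_two_mul_mul hα k _),
    tsum_mul_right, tsum_comp_sub_two_mul h_even h_odd, one_mul]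
  rfl

lemma abs_sub_subdiv_le (hα : (support α).Finite) (h_even : ∑' i, α (2 * i) = 1)
    (h_odd : ∑' i, α (2 * i + 1) = 1) {c g : ℤ → ℝ} {A B : ℝ} (hA : 0 ≤ A) (hB : 0 ≤ B)
    (hg : ∀ k i, |c k - g i| ≤ |(k : ℝ) - 2 * i| * A + B) (k : ℤ) :
    |c k - subdiv α g k| ≤ Kc α / 2 * A + l1Norm α * B := by
  have hα_mom : Summable fun m => |α m| * |(m : ℝ)| :=
    summable_of_hasFiniteSupport <| hα.subset fun m hm h0 => hm (by simp [h0])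
  set w : ℤ → ℝ := fun m => |α m| * |(m : ℝ)| * A + |α m| * B
  have hw : HasSum w (Kc α / 2 * A + l1Norm α * B) := by
    rw [Kc, l1Norm, show ∀ S L : ℝ, 2 * S / 2 * A + L * B = S * A + L * B by intros; ring]
    exact (hα_mom.hasSum.mul_right A).add
      ((summable_of_hasFiniteSupport hα).abs.hasSum.mul_right B)
  have hbound : ∀ i, ‖α (k - 2 * i) * (c k - g i)‖ ≤ w (k - 2 * i) := by
    intro i
    calc ‖α (k - 2 * i) * (c k - g i)‖ = |α (k - 2 * i)| * |c k - g i| := by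
          rw [Real.norm_eq_abs, abs_mul]
      _ ≤ |α (k - 2 * i)| * (|(k : ℝ) - 2 * i| * A + B) := by gcongr; exact hg k i
      _ = w (k - 2 * i) := by simp only [w]; push_cast; ring
  rw [sub_subdiv_eq_tsum hα h_even h_odd, ← hw.tsum_eq]
  calc |∑' i, α (k - 2 * i) * (c k - g i)| ≤ ∑' i, w (k - 2 * i) :=
        tsum_of_norm_bounded (hw.summable.comp_injective (sub_two_mul_injective k)).hasSum hbound
    _ ≤ ∑' m, w m :=
        tsum_comp_le_tsum_of_inj hw.summable (fun m => by simp only [w]; positivity)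
          (sub_two_mul_injective k)

end Subdivision

theorem detail_bound_one_level_general
    (α ζ c : ℤ → ℝ)
    (hα_fin : (Function.support α).Finite)
    (hα_even : ∑' i : ℤ, α (2 * i) = 1)
    (hα_odd : ∑' i : ℤ, α (2 * i + 1) = 1)
    (hζ_sum : Summable (fun i => |ζ i|))
    (hζ_one : ∑' i : ℤ, ζ i = 1)
    (hKζ : Summable (fun i : ℤ => |ζ i| * |(i : ℝ)|))
    (hΔc : BddAbove (Set.range fun j : ℤ => |c (j + 1) - c j|)) :
    supNorm (fun k => c k - subdiv α (decim ζ c) k) ≤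
      (Kc ζ * l1Norm α + Kc α * l1Norm ζ) * deltaSup c := by
  have hD := deltaSup_nonneg c
  have hKα_L_D := mul_nonneg (mul_nonneg (Kc_nonneg α) (l1Norm_nonneg ζ)) hD
  have hKζ_α_D := mul_nonneg (mul_nonneg (Kc_nonneg ζ) (l1Norm_nonneg α)) hD
  refine Real.iSup_le (fun k => ?_) (by linarith)
  calc |c k - subdiv α (decim ζ c) k|
      ≤ Kc α / 2 * (l1Norm ζ * deltaSup c) + l1Norm α * (Kc ζ * deltaSup c) :=
        abs_sub_subdiv_le hα_fin hα_even hα_odd (mul_nonneg (l1Norm_nonneg ζ) hD)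
          (mul_nonneg (Kc_nonneg ζ) hD) (abs_sub_decim_le hζ_sum hζ_one hKζ hΔc) k
    _ ≤ (Kc ζ * l1Norm α + Kc α * l1Norm ζ) * deltaSup c := by linarith

/-- Proportionality of one-level detail coefficients to first differences. -/
theorem detail_bound_one_level
    (α ζ c : ℤ → ℝ)
    (hα_fin : (Function.support α).Finite)
    (hα_even : ∑' i : ℤ, α (2 * i) = 1)
    (hα_odd : ∑' i : ℤ, α (2 * i + 1) = 1)
    (hζ_sum : Summable (fun i => |ζ i|))
    (hζ_one : ∑' i : ℤ, ζ i = 1)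
    (hKζ : Summable (fun i : ℤ => |ζ i| * |(i : ℝ)|))
    (hc_bdd : ∃ M : ℝ, ∀ j : ℤ, |c j| ≤ M)
    (hΔc : BddAbove (Set.range fun j : ℤ => |c (j + 1) - c j|)) :
    supNorm (fun k => c k - subdiv α (decim ζ c) k) ≤
      (Kc ζ * l1Norm α + Kc α * l1Norm ζ) * deltaSup c :=
  detail_bound_one_level_general α ζ c hα_fin hα_even hα_odd hζ_sum hζ_one hKζ hΔc
end
end

section
/- Let ζ : ℤ → ℝ be absolutely summable and let c : ℤ → ℝ be a bounded sequence with Δc := sup_{j∈ℤ} |c_{j+1} − c_j| < ∞. Then Δ(D_ζ c) ≤ 2·‖ζ‖₁·Δc, where ‖ζ‖₁ = Σ_{i∈ℤ}|ζ_i|. -/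
set_option maxHeartbeats 800000


noncomputable section

/-- First differences of a decimated sequence. -/
theorem deltaSup_decim_le
    (ζ c : ℤ → ℝ)
    (hζ_sum : Summable (fun i => |ζ i|))
    (hc_bdd : ∃ M : ℝ, ∀ j : ℤ, |c j| ≤ M)
    (hΔc : BddAbove (Set.range fun j : ℤ => |c (j + 1) - c j|)) :
    deltaSup (decim ζ c) ≤ 2 * l1Norm ζ * deltaSup c := by
  obtain ⟨M, hM⟩ := hc_bdd
  -- basic facts
  have hΔ : ∀ j : ℤ, |c (j + 1) - c j| ≤ deltaSup c := fun j =>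
    le_ciSup hΔc j
  have hΔ2 : ∀ i : ℤ, |c (2 * i + 2) - c (2 * i)| ≤ 2 * deltaSup c := by
    intro i
    have h1 := hΔ (2 * i)
    have h2 := hΔ (2 * i + 1)
    calc |c (2 * i + 2) - c (2 * i)|
        = |(c (2 * i + 1 + 1) - c (2 * i + 1)) + (c (2 * i + 1) - c (2 * i))| := by
          ring_nf
      _ ≤ |c (2 * i + 1 + 1) - c (2 * i + 1)| + |c (2 * i + 1) - c (2 * i)| := abs_add_le _ _
      _ ≤ deltaSup c + deltaSup c := add_le_add h2 h1
      _ = 2 * deltaSup c := by ring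
  -- summability of shifted ζ
  have hζj : ∀ j : ℤ, Summable (fun i : ℤ => |ζ (j - i)|) := by
    intro j
    have := (Equiv.subLeft j).summable_iff.mpr hζ_sum
    simpa [Function.comp_def, Equiv.subLeft] using this
  have hl1 : ∀ j : ℤ, (∑' i : ℤ, |ζ (j - i)|) = l1Norm ζ := by
    intro j
    have := (Equiv.subLeft j).tsum_eq (fun i => |ζ i|)
    simpa [Equiv.subLeft, l1Norm] using this
  have hMnn : 0 ≤ M := le_trans (abs_nonneg _) (hM 0)
  have hsum : ∀ j : ℤ, Summable (fun i : ℤ => ζ (j - i) * c (2 * i)) := by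
    intro j
    apply Summable.of_abs
    apply Summable.of_nonneg_of_le (fun i => abs_nonneg _) _ ((hζj j).mul_right M)
    intro i
    rw [abs_mul]
    exact mul_le_mul_of_nonneg_left (hM _) (abs_nonneg _)
  -- bound each term
  have key : ∀ j : ℤ, |decim ζ c (j + 1) - decim ζ c j| ≤ 2 * l1Norm ζ * deltaSup c := by
    intro j
    have hre : decim ζ c (j + 1) = ∑' i : ℤ, ζ (j - i) * c (2 * i + 2) := by
      unfold decim
      rw [← (Equiv.addRight (1 : ℤ)).tsum_eq (fun i => ζ (j + 1 - i) * c (2 * i))]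
      apply tsum_congr
      intro i
      simp only [Equiv.coe_addRight]
      rw [show j + 1 - (i + 1) = j - i from by ring, show 2 * (i + 1) = 2 * i + 2 from by ring]
    have hsum2 : Summable (fun i : ℤ => ζ (j - i) * c (2 * i + 2)) := by
      apply Summable.of_abs
      apply Summable.of_nonneg_of_le (fun i => abs_nonneg _) _ ((hζj j).mul_right M)
      intro i
      rw [abs_mul]
      exact mul_le_mul_of_nonneg_left (hM _) (abs_nonneg _)
    have hdiff : decim ζ c (j + 1) - decim ζ c j
        = ∑' i : ℤ, ζ (j - i) * (c (2 * i + 2) - c (2 * i)) := by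
      rw [hre]
      unfold decim
      rw [← Summable.tsum_sub hsum2 (hsum j)]
      apply tsum_congr
      intro i
      ring
    rw [hdiff]
    have habs : ∀ i : ℤ, |ζ (j - i) * (c (2 * i + 2) - c (2 * i))|
        ≤ |ζ (j - i)| * (2 * deltaSup c) := by
      intro i
      rw [abs_mul]
      exact mul_le_mul_of_nonneg_left (hΔ2 i) (abs_nonneg _)
    calc |∑' i : ℤ, ζ (j - i) * (c (2 * i + 2) - c (2 * i))|
        ≤ ∑' i : ℤ, |ζ (j - i) * (c (2 * i + 2) - c (2 * i))| := by
          have hs : Summable (fun i : ℤ => ‖ζ (j - i) * (c (2 * i + 2) - c (2 * i))‖) := by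
            simpa only [Real.norm_eq_abs] using
              Summable.of_nonneg_of_le (fun i => abs_nonneg _) habs ((hζj j).mul_right _)
          simpa only [Real.norm_eq_abs] using norm_tsum_le_tsum_norm hs
      _ ≤ ∑' i : ℤ, |ζ (j - i)| * (2 * deltaSup c) := by
          apply Summable.tsum_le_tsum habs
          · apply Summable.of_nonneg_of_le (fun i => abs_nonneg _) habs
              ((hζj j).mul_right _)
          · exact (hζj j).mul_right _
      _ = (∑' i : ℤ, |ζ (j - i)|) * (2 * deltaSup c) := tsum_mul_right
      _ = 2 * l1Norm ζ * deltaSup c := by rw [hl1 j]; ring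
  exact ciSup_le key
end
end

section
/- Let α : ℤ → ℝ be a finitely supported mask. Then the operator norm of the subdivision operator S_α on bounded sequences satisfies sup { ‖S_α c‖_∞ : c : ℤ → ℝ with ‖c‖_∞ ≤ 1 } = max { Σ_{k∈ℤ} |α_{2k}| , Σ_{k∈ℤ} |α_{2k+1}| }. -/
noncomputable section

section aux
variable (α : ℤ → ℝ)

lemma fin_support (hα : (Function.support α).Finite) (j : ℤ) (c : ℤ → ℝ) :
    (Function.support (fun i => α (j - 2*i) * c i)).Finite := by
  have hinj : Function.Injective (fun i : ℤ => j - 2 * i) := by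
    intro a b h
    simp only at h
    omega
  apply Set.Finite.subset (Set.Finite.preimage hinj.injOn hα)
  intro i hi
  simp only [Function.mem_support, Set.mem_preimage, Function.mem_support] at hi ⊢
  intro h
  exact hi (by rw [h, zero_mul])

lemma summable1 (hα : (Function.support α).Finite) (j : ℤ) (c : ℤ → ℝ) :
    Summable (fun i => α (j - 2*i) * c i) :=
  summable_of_finite_support (fin_support α hα j c)

lemma summable_abs1 (hα : (Function.support α).Finite) (j : ℤ) :
    Summable (fun i : ℤ => |α (j - 2*i)|) := by
  have := (summable1 α hα j (fun _ => 1)).abs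
  simpa using this

lemma tsum_even (m : ℤ) : ∑' i : ℤ, |α (2*m - 2*i)| = ∑' k : ℤ, |α (2*k)| := by
  have := (Equiv.subLeft m).tsum_eq (fun k : ℤ => |α (2*k)|)
  simp only [Equiv.subLeft_apply] at this
  calc ∑' i : ℤ, |α (2*m - 2*i)| = ∑' i : ℤ, |α (2*(m-i))| :=
        tsum_congr fun i => by ring_nf
    _ = _ := this

lemma tsum_odd (m : ℤ) : ∑' i : ℤ, |α (2*m + 1 - 2*i)| = ∑' k : ℤ, |α (2*k+1)| := by
  have := (Equiv.subLeft m).tsum_eq (fun k : ℤ => |α (2*k+1)|)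
  simp only [Equiv.subLeft_apply] at this
  calc ∑' i : ℤ, |α (2*m + 1 - 2*i)| = ∑' i : ℤ, |α (2*(m-i)+1)| :=
        tsum_congr fun i => by ring_nf
    _ = _ := this

end aux

section main
variable (α : ℤ → ℝ)

lemma tsum_abs_le_max (hα : (Function.support α).Finite) (j : ℤ) :
    ∑' i : ℤ, |α (j - 2*i)| ≤ max (∑' k : ℤ, |α (2*k)|) (∑' k : ℤ, |α (2*k+1)|) := by
  rcases Int.even_or_odd j with ⟨m, hm⟩ | ⟨m, hm⟩
  · rw [show j = 2*m by omega, tsum_even]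
    exact le_max_left _ _
  · rw [show j = 2*m + 1 by omega, tsum_odd]
    exact le_max_right _ _

lemma pointwise_bound (hα : (Function.support α).Finite) (c : ℤ → ℝ)
    (hc : ∀ j, |c j| ≤ 1) (j : ℤ) :
    |subdiv α c j| ≤ max (∑' k : ℤ, |α (2*k)|) (∑' k : ℤ, |α (2*k+1)|) := by
  have hs := (summable1 α hα j c).abs
  have h1 : ‖∑' i : ℤ, α (j - 2*i) * c i‖ ≤ ∑' i : ℤ, ‖α (j - 2*i) * c i‖ :=
    norm_tsum_le_tsum_norm (by simpa only [Real.norm_eq_abs] using hs)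
  simp only [Real.norm_eq_abs] at h1
  rw [subdiv]
  have h2 : ∑' i : ℤ, |α (j - 2*i) * c i| ≤ ∑' i : ℤ, |α (j - 2*i)| := by
    refine Summable.tsum_le_tsum (fun i => ?_) hs (summable_abs1 α hα j)
    rw [abs_mul]
    calc |α (j - 2*i)| * |c i| ≤ |α (j - 2*i)| * 1 :=
          mul_le_mul_of_nonneg_left (hc i) (abs_nonneg _)
      _ = _ := mul_one _
  exact h1.trans (h2.trans (tsum_abs_le_max α hα j))

lemma supnorm_bound (hα : (Function.support α).Finite) (c : ℤ → ℝ)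
    (hc : ∀ j, |c j| ≤ 1) :
    supNorm (subdiv α c) ≤ max (∑' k : ℤ, |α (2*k)|) (∑' k : ℤ, |α (2*k+1)|) :=
  ciSup_le (pointwise_bound α hα c hc)

lemma exists_extremal (j0 : ℤ) :
    ∃ c : ℤ → ℝ, (∀ j, |c j| ≤ 1) ∧ subdiv α c j0 = ∑' i : ℤ, |α (j0 - 2*i)| := by
  refine ⟨fun i => if 0 ≤ α (j0 - 2*i) then 1 else -1, fun j => by dsimp only; split <;> simp, ?_⟩
  rw [subdiv]
  refine tsum_congr fun i => ?_
  split
  · rename_i h; rw [mul_one, abs_of_nonneg h]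
  · rename_i h; rw [abs_of_neg (lt_of_not_ge h)]; ring

theorem subdiv_opNorm_eq_max_aux
    (hα_fin : (Function.support α).Finite) :
    sSup {x : ℝ | ∃ c : ℤ → ℝ, (∀ j : ℤ, |c j| ≤ 1) ∧ x = supNorm (subdiv α c)} =
      max (∑' k : ℤ, |α (2 * k)|) (∑' k : ℤ, |α (2 * k + 1)|) := by
  set M := max (∑' k : ℤ, |α (2 * k)|) (∑' k : ℤ, |α (2 * k + 1)|) with hM
  have hM0 : 0 ≤ M := le_trans (tsum_nonneg fun k => abs_nonneg _) (le_max_left _ _)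
  have hmem : M ∈ {x : ℝ | ∃ c : ℤ → ℝ, (∀ j : ℤ, |c j| ≤ 1) ∧ x = supNorm (subdiv α c)} := by
    have key : ∃ j0 : ℤ, ∑' i : ℤ, |α (j0 - 2*i)| = M := by
      rcases max_cases (∑' k : ℤ, |α (2 * k)|) (∑' k : ℤ, |α (2 * k + 1)|) with ⟨h, _⟩ | ⟨h, _⟩
      · exact ⟨0, by rw [hM, h]; simpa using tsum_even α 0⟩
      · exact ⟨1, by rw [hM, h]; simpa using tsum_odd α 0⟩
    obtain ⟨j0, hj0⟩ := key
    obtain ⟨c, hc, hcj0⟩ := exists_extremal α j0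
    refine ⟨c, hc, le_antisymm ?_ (supnorm_bound α hα_fin c hc)⟩
    have hbdd : BddAbove (Set.range fun j => |subdiv α c j|) := by
      refine ⟨M, ?_⟩
      rintro x ⟨j, rfl⟩
      exact pointwise_bound α hα_fin c hc j
    calc M = |subdiv α c j0| := by rw [hcj0, hj0, abs_of_nonneg hM0]
      _ ≤ supNorm (subdiv α c) := le_ciSup hbdd j0
  apply le_antisymm
  · refine csSup_le ⟨M, hmem⟩ ?_
    rintro x ⟨c, hc, rfl⟩
    exact supnorm_bound α hα_fin c hc
  · refine le_csSup ⟨M, ?_⟩ hmem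
    rintro x ⟨c, hc, rfl⟩
    exact supnorm_bound α hα_fin c hc

end main

/-- The operator norm of a subdivision operator is the maximum of the
even and odd absolute mask sums. -/
theorem subdiv_opNorm_eq_max
    (α : ℤ → ℝ)
    (hα_fin : (Function.support α).Finite) :
    sSup {x : ℝ | ∃ c : ℤ → ℝ, (∀ j : ℤ, |c j| ≤ 1) ∧ x = supNorm (subdiv α c)} =
      max (∑' k : ℤ, |α (2 * k)|) (∑' k : ℤ, |α (2 * k + 1)|) :=
  subdiv_opNorm_eq_max_aux α hα_fin
end
end

section
/- Let α : ℤ → ℝ be a finitely supported mask and γ : ℤ → ℝ be absolutely summable. Then the even reversibility property holds, namely ((I − S_α D_γ) c)_{2j} = 0 for every bounded sequence c : ℤ → ℝ and every j ∈ ℤ, if and only if γ solves the convolutional equation γ * (α↓2) = δ, i.e., Σ_{i∈ℤ} γ_{j−i} α_{2i} = δ_j for all j ∈ ℤ. -/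
/-
Expanding the definitions, `(S_α D_γ c)_{2j} = Σ_i α_{2j-2i} Σ_k γ_{i-k} c_{2k}`. The outer sum is
finite and each inner one converges (γ is summable and c bounded), so the two sums may be swapped,
and after the substitution `i = j - m` the coefficient of `c_{2k}` is `(γ * (α↓2))_{j-k}`. Hence
even reversibility says `Σ_k (γ * (α↓2))_{j-k} c_{2k} = c_{2j}` for all bounded `c`, which holds
for `γ * (α↓2) = δ` and, tested on `c = δ`, forces it.
-/

noncomputable section

open Function

theorem tsum_mul_tsum_comm_of_finite_support {ι κ R : Type*} [Semiring R] [TopologicalSpace R]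
    [IsTopologicalSemiring R] [T2Space R] {a : ι → R} {f : ι → κ → R}
    (ha : (support a).Finite) (hf : ∀ i, Summable (f i)) :
    ∑' i, a i * ∑' k, f i k = ∑' k, ∑' i, a i * f i k := by
  have hzero : ∀ i ∉ ha.toFinset, a i = 0 := fun i hi => by simpa using hi
  rw [tsum_eq_sum fun i hi => by rw [hzero i hi, zero_mul]]
  simp_rw [← (hf _).tsum_mul_left]
  rw [← Summable.tsum_finsetSum fun i _ => (hf i).mul_left (a i)]
  refine tsum_congr fun k => (tsum_eq_sum fun i hi => ?_).symm
  rw [hzero i hi, zero_mul]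

theorem summable_mul_of_summable_abs_of_bounded {ι : Type*} {γ c : ι → ℝ}
    (hγ : Summable fun i => |γ i|) (hc : ∃ M, ∀ i, |c i| ≤ M) :
    Summable fun i => γ i * c i := by
  obtain ⟨M, hM⟩ := hc
  refine Summable.of_norm_bounded (hγ.mul_right M) fun i => ?_
  rw [Real.norm_eq_abs, abs_mul]
  exact mul_le_mul_of_nonneg_left (hM i) (abs_nonneg _)

theorem summable_decim_terms {γ c : ℤ → ℝ} (hγ : Summable fun i => |γ i|)
    (hc : ∃ M, ∀ j, |c j| ≤ M) (i : ℤ) :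
    Summable fun k => γ (i - k) * c (2 * k) :=
  summable_mul_of_summable_abs_of_bounded ((Equiv.subLeft i).summable_iff.mpr hγ)
    (hc.imp fun _ hM k => hM (2 * k))

theorem tsum_mul_even_sub_eq_tsum_mul_downsample (α γ : ℤ → ℝ) (j k : ℤ) :
    ∑' i, α (2 * j - 2 * i) * γ (i - k) = ∑' m, γ (j - k - m) * α (2 * m) := by
  rw [← (Equiv.subLeft j).tsum_eq]
  refine tsum_congr fun m => ?_
  simp only [Equiv.subLeft_apply]
  rw [mul_comm, show j - m - k = j - k - m by ring, show 2 * j - 2 * (j - m) = 2 * m by ring]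

theorem subdiv_decim_apply_two_mul {α γ c : ℤ → ℝ} (hα : (support α).Finite)
    (hγc : ∀ i, Summable fun k => γ (i - k) * c (2 * k)) (j : ℤ) :
    subdiv α (decim γ c) (2 * j) = ∑' k, (∑' i, γ (j - k - i) * α (2 * i)) * c (2 * k) := by
  have hfin : (support fun i => α (2 * j - 2 * i)).Finite :=
    hα.preimage fun a _ b _ hab => by simpa using hab
  unfold subdiv decim
  rw [tsum_mul_tsum_comm_of_finite_support hfin hγc]
  refine tsum_congr fun k => ?_
  simp_rw [← tsum_mul_even_sub_eq_tsum_mul_downsample, ← mul_assoc]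
  exact tsum_mul_right

/-- Even reversibility holds iff γ solves the convolutional equation
γ * (α↓2) = δ. -/
theorem even_reversibility_iff
    (α γ : ℤ → ℝ)
    (hα_fin : (Function.support α).Finite)
    (hγ_sum : Summable (fun i => |γ i|)) :
    (∀ c : ℤ → ℝ, (∃ M : ℝ, ∀ j : ℤ, |c j| ≤ M) →
        ∀ j : ℤ, c (2 * j) - subdiv α (decim γ c) (2 * j) = 0) ↔
      (∀ j : ℤ, ∑' i : ℤ, γ (j - i) * α (2 * i) = if j = 0 then (1 : ℝ) else 0) := by
  have hexpand := fun c hc =>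
    subdiv_decim_apply_two_mul (c := c) hα_fin (summable_decim_terms hγ_sum hc)
  constructor
  · intro h j
    have hδ : ∃ M : ℝ, ∀ n : ℤ, |(if n = 0 then (1 : ℝ) else 0)| ≤ M :=
      ⟨1, fun n => by split_ifs <;> simp⟩
    have hj := h _ hδ j
    simp only [hexpand _ hδ, mul_eq_zero, OfNat.ofNat_ne_zero, false_or, mul_ite, mul_one, mul_zero,
      tsum_ite_eq, sub_zero, sub_eq_zero] at hj
    exact hj.symm
  · intro h c hc j
    rw [hexpand c hc, sub_eq_zero]
    simp_rw [h, ite_mul, one_mul, zero_mul, sub_eq_zero, eq_comm (a := j)]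
    exact (tsum_ite_eq j fun k => c (2 * k)).symm
end
end

section
/- Let α : ℤ → ℝ be a finitely supported mask and ζ : ℤ → ℝ be absolutely summable. Then for every bounded sequence c : ℤ → ℝ, the downsampled residual satisfies ((I − S_α D_ζ) c) ↓ 2 = (δ − ζ * (α↓2)) * (c↓2), and consequently the operator norm of the linear map c ↦ ((I − S_α D_ζ) c) ↓ 2 on bounded sequences equals ‖δ − ζ * (α↓2)‖₁. -/
noncomputable section

/-- Convolution of two bi-infinite sequences. -/
def conv (a b : ℤ → ℝ) : ℤ → ℝ := fun j => ∑' i, a (j - i) * b i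

/-- The Kronecker delta sequence. -/
def kdelta : ℤ → ℝ := fun j => if j = 0 then 1 else 0

lemma summable_shiftL {f : ℤ → ℝ} (hf : Summable f) (a : ℤ) :
    Summable (fun k => f (a - k)) :=
  ((Equiv.subLeft a).summable_iff).2 hf

lemma summable_shiftR {f : ℤ → ℝ} (hf : Summable f) (a : ℤ) :
    Summable (fun k => f (k - a)) :=
  ((Equiv.subRight a).summable_iff).2 hf

/-- The downsampled residual is a convolution with δ − ζ*(α↓2), and the
operator norm of c ↦ ((I − S_α D_ζ) c)↓2 equals ‖δ − ζ*(α↓2)‖₁. -/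
theorem downsampled_residual_conv_and_opNorm
    (α ζ : ℤ → ℝ)
    (hα_fin : (Function.support α).Finite)
    (hζ_sum : Summable (fun i => |ζ i|)) :
    (∀ c : ℤ → ℝ, (∃ M : ℝ, ∀ j : ℤ, |c j| ≤ M) →
        ∀ j : ℤ, c (2 * j) - subdiv α (decim ζ c) (2 * j) =
          conv (fun k => kdelta k - conv ζ (fun m => α (2 * m)) k)
            (fun k => c (2 * k)) j) ∧
      sSup {x : ℝ | ∃ c : ℤ → ℝ, (∀ j : ℤ, |c j| ≤ 1) ∧
          x = supNorm (fun j => c (2 * j) - subdiv α (decim ζ c) (2 * j))} =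
        l1Norm (fun k => kdelta k - conv ζ (fun m => α (2 * m)) k) := by
  set β : ℤ → ℝ := fun m => α (2 * m) with hβdef
  set g : ℤ → ℝ := fun k => kdelta k - conv ζ β k with hgdef
  have hβ_fin : (Function.support β).Finite := by
    have : Function.support β ⊆ (fun m : ℤ => 2 * m) ⁻¹' Function.support α := by
      intro m hm; exact hm
    exact (hα_fin.preimage (Set.injOn_of_injective (fun a b h => by omega))).subset this
  set S : Finset ℤ := hβ_fin.toFinset with hSdef
  have hβ0 : ∀ m ∉ S, β m = 0 := by
    intro m hm
    by_contra h
    exact hm (hβ_fin.mem_toFinset.2 h)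
  have hconv_eq : ∀ k, conv ζ β k = ∑ i ∈ S, ζ (k - i) * β i := by
    intro k
    exact tsum_eq_sum (fun i hi => by rw [hβ0 i hi, mul_zero])
  -- summability of |conv ζ β|
  have hA : Summable (fun k => |conv ζ β k|) := by
    refine Summable.of_nonneg_of_le (f := fun k => ∑ i ∈ S, |ζ (k - i)| * |β i|)
      (fun k => abs_nonneg _) (fun k => ?_)
      (summable_sum (fun i _ => (summable_shiftR hζ_sum i).mul_right |β i|))
    rw [hconv_eq]
    refine (Finset.abs_sum_le_sum_abs _ _).trans ?_
    exact le_of_eq (Finset.sum_congr rfl (fun i _ => abs_mul _ _))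
  have hkd : Summable (fun k => |kdelta k|) := by
    apply summable_of_ne_finset_zero (s := {(0:ℤ)})
    intro k hk
    simp only [Finset.mem_singleton] at hk
    simp [kdelta, hk]
  have hgabs : Summable (fun k => |g k|) := by
    apply Summable.of_nonneg_of_le (fun k => abs_nonneg _) (fun k => abs_sub _ _) (hkd.add hA)
  -- Part 1
  have key : ∀ c : ℤ → ℝ, (∃ M : ℝ, ∀ j : ℤ, |c j| ≤ M) →
      ∀ j : ℤ, c (2 * j) - subdiv α (decim ζ c) (2 * j) =
        conv g (fun k => c (2 * k)) j := by
    rintro c ⟨M, hM⟩ j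
    have habs : ∀ w : ℤ → ℝ, Summable (fun m => |w m|) →
        Summable (fun m => w m * c (2 * m)) := by
      intro w hw
      apply Summable.of_abs
      apply Summable.of_nonneg_of_le (fun m => abs_nonneg _) (fun m => ?_) (hw.mul_right M)
      rw [abs_mul]
      exact mul_le_mul_of_nonneg_left (hM _) (abs_nonneg _)
    have hdecim : ∀ i, Summable (fun m => ζ (i - m) * c (2 * m)) := by
      intro i; exact habs _ (summable_shiftL hζ_sum i)
    set T : Finset ℤ := S.image (fun s => j - s) with hTdef
    -- Step A
    have stepA : subdiv α (decim ζ c) (2 * j) = ∑ i ∈ T, β (j - i) * decim ζ c i := by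
      have h1 : ∀ i : ℤ, α (2 * j - 2 * i) = β (j - i) := by
        intro i; simp only [hβdef]; ring_nf
      unfold subdiv
      rw [show (fun i => α (2 * j - 2 * i) * decim ζ c i)
          = fun i => β (j - i) * decim ζ c i from funext (fun i => by rw [h1])]
      apply tsum_eq_sum
      intro i hi
      have : j - i ∉ S := by
        intro hmem
        exact hi (Finset.mem_image.2 ⟨j - i, hmem, by ring⟩)
      rw [hβ0 _ this, zero_mul]
    -- Step B+C: swap finite sum and tsum
    have stepB : ∑ i ∈ T, β (j - i) * decim ζ c i
        = ∑' m, ∑ i ∈ T, β (j - i) * (ζ (i - m) * c (2 * m)) := by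
      rw [Summable.tsum_finsetSum (fun i _ => (hdecim i).mul_left (β (j - i)))]
      apply Finset.sum_congr rfl
      intro i _
      unfold decim
      rw [← tsum_mul_left]
    -- Step D: identify the inner sum with conv ζ β (j - m) * c (2 m)
    have stepD : ∀ m : ℤ, ∑ i ∈ T, β (j - i) * (ζ (i - m) * c (2 * m))
        = conv ζ β (j - m) * c (2 * m) := by
      intro m
      rw [hconv_eq, Finset.sum_mul, hTdef,
        Finset.sum_image (fun a _ b _ h => by omega)]
      apply Finset.sum_congr rfl
      intro s _
      have : j - (j - s) = s := by ring
      rw [this]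
      ring_nf
    have hsubdiv : subdiv α (decim ζ c) (2 * j) = ∑' m, conv ζ β (j - m) * c (2 * m) := by
      rw [stepA, stepB]
      exact tsum_congr stepD
    -- RHS
    have hkdsum : Summable (fun m => kdelta (j - m) * c (2 * m)) := by
      apply summable_of_ne_finset_zero (s := {j})
      intro m hm
      simp only [Finset.mem_singleton] at hm
      have : j - m ≠ 0 := by omega
      simp [kdelta, this]
    have hconvsum : Summable (fun m => conv ζ β (j - m) * c (2 * m)) :=
      habs _ (summable_shiftL hA j)
    have hrhs : conv g (fun k => c (2 * k)) j
        = ∑' m, kdelta (j - m) * c (2 * m) - ∑' m, conv ζ β (j - m) * c (2 * m) := by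
      have e1 : conv g (fun k => c (2 * k)) j = ∑' m, g (j - m) * c (2 * m) := rfl
      rw [e1, show (fun m => g (j - m) * c (2 * m))
          = fun m => kdelta (j - m) * c (2 * m) - conv ζ β (j - m) * c (2 * m)
          from funext fun m => by simp only [hgdef]; ring,
        Summable.tsum_sub hkdsum hconvsum]
    have hkdval : ∑' m, kdelta (j - m) * c (2 * m) = c (2 * j) := by
      rw [tsum_eq_single j (fun m hm => by
        have : j - m ≠ 0 := by omega
        simp [kdelta, this])]
      simp [kdelta]
    rw [hrhs, hkdval, hsubdiv]
  refine ⟨key, ?_⟩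
  -- Part 2
  set L : ℝ := l1Norm g with hLdef
  have hL0 : 0 ≤ L := tsum_nonneg (fun _ => abs_nonneg _)
  -- uniform bound
  have upper : ∀ c : ℤ → ℝ, (∀ j : ℤ, |c j| ≤ 1) →
      ∀ j : ℤ, |c (2 * j) - subdiv α (decim ζ c) (2 * j)| ≤ L := by
    intro c hc j
    rw [key c ⟨1, hc⟩ j]
    have hle : ∀ m : ℤ, |g (j - m)| * |c (2 * m)| ≤ |g (j - m)| := by
      intro m
      calc |g (j - m)| * |c (2 * m)| ≤ |g (j - m)| * 1 :=
            mul_le_mul_of_nonneg_left (hc _) (abs_nonneg _)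
        _ = |g (j - m)| := mul_one _
    have h1 : Summable (fun m => |g (j - m)| * |c (2 * m)|) :=
      Summable.of_nonneg_of_le (fun m => mul_nonneg (abs_nonneg _) (abs_nonneg _)) hle
        (summable_shiftL hgabs j)
    have h1' : Summable (fun m => ‖g (j - m) * c (2 * m)‖) := by
      simp only [Real.norm_eq_abs, abs_mul]
      exact h1
    have e1 : conv g (fun k => c (2 * k)) j = ∑' m, g (j - m) * c (2 * m) := rfl
    rw [e1]
    calc |∑' m, g (j - m) * c (2 * m)| ≤ ∑' m, |g (j - m)| * |c (2 * m)| := by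
          have := norm_tsum_le_tsum_norm h1'
          simpa [Real.norm_eq_abs, abs_mul] using this
      _ ≤ ∑' m, |g (j - m)| := Summable.tsum_le_tsum hle h1 (summable_shiftL hgabs j)
      _ = L := (Equiv.subLeft j).tsum_eq (fun k => |g k|)
  -- the extremal sequence
  set c0 : ℤ → ℝ := fun n => if g (-(n / 2)) < 0 then -1 else 1 with hc0def
  have hc0bd : ∀ j : ℤ, |c0 j| ≤ 1 := by
    intro j
    simp only [hc0def]
    split <;> simp
  have hc0val : ∀ m : ℤ, g (-m) * c0 (2 * m) = |g (-m)| := by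
    intro m
    have : (2 * m) / 2 = m := by omega
    simp only [hc0def, this]
    rcases lt_trichotomy (g (-m)) 0 with h | h | h
    · rw [if_pos h, abs_of_neg h]; ring
    · simp [h]
    · rw [if_neg (not_lt.2 h.le), abs_of_pos h, mul_one]
  set f0 : ℤ → ℝ := fun j => c0 (2 * j) - subdiv α (decim ζ c0) (2 * j) with hf0def
  have hf00 : f0 0 = L := by
    have := key c0 ⟨1, hc0bd⟩ 0
    simp only [hf0def]
    rw [this]
    unfold conv
    have : ∀ m : ℤ, g (0 - m) * c0 (2 * m) = |g (-m)| := by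
      intro m
      rw [zero_sub]
      exact hc0val m
    rw [tsum_congr this]
    exact (Equiv.neg ℤ).tsum_eq (fun k => |g k|)
  have hsup0 : supNorm f0 = L := by
    apply le_antisymm
    · exact ciSup_le (fun j => upper c0 hc0bd j)
    · have hbdd : BddAbove (Set.range fun j => |f0 j|) := by
        refine ⟨L, ?_⟩
        rintro x ⟨j, rfl⟩
        exact upper c0 hc0bd j
      calc L = |f0 0| := by rw [hf00, abs_of_nonneg hL0]
        _ ≤ ⨆ j, |f0 j| := le_ciSup hbdd 0
  apply le_antisymm
  · apply Real.sSup_le _ hL0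
    rintro x ⟨c, hc, rfl⟩
    exact ciSup_le (fun j => upper c hc j)
  · apply le_csSup
    · refine ⟨L, ?_⟩
      rintro x ⟨c, hc, rfl⟩
      exact ciSup_le (fun j => upper c hc j)
    · exact ⟨c0, hc0bd, hsup0.symm⟩
end
end
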